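/- Suppose Q is in rational normal form with parameters z and k_1,…,k_d, and γ is generic. If α is a normalized 2-cocycle on g(γ,Q) with m∈R and n∈ℤ^d∖R, then (γ|n)·α(L_{m+n},L_{−m−n}) = (γ|m+n)·α(L_n,L_{−n}); in particular the diagonal values of α on ℤ^d∖R are determined by its values on Γ={n∈ℤ^d∖R : 0≤n_i<k_i for all 1≤i≤d}. -/

import Mathlib

open scoped BigOperators

namespace QTorus

/-- σ(m,n) = ∏_{i<j} q_{ji}^{m_j n_i}. -/
noncomputable def qsigma (d : ℕ) (Q : Matrix (Fin d) (Fin d) ℂ) (m n : Fin d → ℤ) : ℂ :=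
  ∏ i : Fin d, ∏ j : Fin d, if i < j then Q j i ^ (m j * n i) else 1

/-- The radical subgroup R = {m | σ(m,n)=σ(n,m) for all n}. -/
def Rset (d : ℕ) (Q : Matrix (Fin d) (Fin d) ℂ) : Set (Fin d → ℤ) :=
  {m | ∀ n : Fin d → ℤ, qsigma d Q m n = qsigma d Q n m}

/-- (γ|m) = ∑ γ_i m_i. -/
noncomputable def ip (d : ℕ) (γ : Fin d → ℂ) (m : Fin d → ℤ) : ℂ :=
  ∑ i : Fin d, γ i * (m i : ℂ)

/-- The underlying vector space of g(γ,Q): formal ℂ-linear combinations of basis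
vectors indexed by ℤ^d. -/
abbrev g (d : ℕ) := (Fin d → ℤ) →₀ ℂ

/-- The basis vector L_m. -/
noncomputable def L (d : ℕ) (m : Fin d → ℤ) : g d := Finsupp.single m 1

/-- Hypotheses on the matrix Q: nonzero entries, q_{ii}=1, q_{ij}q_{ji}=1. -/
def QOk (d : ℕ) (Q : Matrix (Fin d) (Fin d) ℂ) : Prop :=
  (∀ i, Q i i = 1) ∧ (∀ i j, Q i j * Q j i = 1) ∧ (∀ i j, Q i j ≠ 0)

/-- γ is generic: γ_1,…,γ_d are linearly independent over ℚ. -/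
def Generic (d : ℕ) (γ : Fin d → ℂ) : Prop := LinearIndependent ℚ γ

open Classical in
/-- Structure constants of g(γ,Q): [L_m, L_n] = sc(m,n) • L_{m+n}. -/
noncomputable def sc (d : ℕ) (Q : Matrix (Fin d) (Fin d) ℂ) (γ : Fin d → ℂ)
    (m n : Fin d → ℤ) : ℂ :=
  if m ∈ Rset d Q then
    (if n ∈ Rset d Q then qsigma d Q m n * ip d γ (n - m)
     else qsigma d Q m n * ip d γ n)
  else
    (if n ∈ Rset d Q then -(qsigma d Q n m * ip d γ m)
     else qsigma d Q m n - qsigma d Q n m)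

/-- The bracket of g(γ,Q), as the bilinear extension of
[L_m, L_n] = sc(m,n) • L_{m+n}. -/
noncomputable def br (d : ℕ) (Q : Matrix (Fin d) (Fin d) ℂ) (γ : Fin d → ℂ)
    (x y : g d) : g d :=
  x.sum fun m a => y.sum fun n b => Finsupp.single (m + n) (a * b * sc d Q γ m n)

/-- A Lie algebra automorphism of g(γ,Q): a linear equivalence preserving the bracket. -/
def IsAut (d : ℕ) (Q : Matrix (Fin d) (Fin d) ℂ) (γ : Fin d → ℂ)
    (θ : g d ≃ₗ[ℂ] g d) : Prop :=
  ∀ x y : g d, θ (br d Q γ x y) = br d Q γ (θ x) (θ y)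

/-- A derivation of g(γ,Q). -/
def IsDer (d : ℕ) (Q : Matrix (Fin d) (Fin d) ℂ) (γ : Fin d → ℂ)
    (D : g d →ₗ[ℂ] g d) : Prop :=
  ∀ x y : g d, D (br d Q γ x y) = br d Q γ (D x) y + br d Q γ x (D y)

open Classical in
/-- δ(n,R) = 1 if n ∈ R, 0 otherwise. -/
noncomputable def deltaR (d : ℕ) (Q : Matrix (Fin d) (Fin d) ℂ) (n : Fin d → ℤ) : ℕ :=
  if n ∈ Rset d Q then 1 else 0

/-- A 2-cocycle on g(γ,Q). -/
def IsCocycle (d : ℕ) (Q : Matrix (Fin d) (Fin d) ℂ) (γ : Fin d → ℂ)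
    (α : g d →ₗ[ℂ] g d →ₗ[ℂ] ℂ) : Prop :=
  (∀ x y : g d, α x y = - α y x) ∧
  (∀ x y z : g d,
    α (br d Q γ x y) z + α (br d Q γ z x) y + α (br d Q γ y z) x = 0)

/-- i ↔ j is one of the exceptional index pairs (2l-1,2l) (1-based) of the rational
normal form. Here indices are 0-based. -/
def OffDiagPair (z : ℕ) (i j : ℕ) : Prop :=
  ∃ l : ℕ, l < z ∧ ((i = 2 * l ∧ j = 2 * l + 1) ∨ (i = 2 * l + 1 ∧ j = 2 * l))

/-- Q is in rational normal form with parameters z and k_1,…,k_d (0-based indexing: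
the paper's pair (2i-1,2i) is the Lean pair (2l, 2l+1) with l = i-1). -/
def IsRNF (d : ℕ) (Q : Matrix (Fin d) (Fin d) ℂ) (z : ℕ) (k : Fin d → ℕ) : Prop :=
  0 < z ∧ 2 * z ≤ d ∧
  (∀ i j : Fin d, ¬ OffDiagPair z i.val j.val → Q i j = 1) ∧
  (∀ (l : ℕ) (_ : l < z) (hi : 2 * l < d) (hj : 2 * l + 1 < d),
      IsPrimitiveRoot (Q ⟨2 * l, hi⟩ ⟨2 * l + 1, hj⟩) (k ⟨2 * l, hi⟩) ∧
      Q ⟨2 * l + 1, hj⟩ ⟨2 * l, hi⟩ = (Q ⟨2 * l, hi⟩ ⟨2 * l + 1, hj⟩)⁻¹ ∧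
      k ⟨2 * l + 1, hj⟩ = k ⟨2 * l, hi⟩ ∧
      1 < k ⟨2 * l, hi⟩) ∧
  (∀ (i : ℕ) (_ : i + 1 < 2 * z) (h1 : i < d) (h2 : i + 1 < d),
      k ⟨i + 1, h2⟩ ∣ k ⟨i, h1⟩) ∧
  (∀ i : Fin d, 2 * z ≤ i.val → k i = 1)

/-- The vector k_1 e_1 ∈ ℤ^d. -/
noncomputable def k1e1 (d : ℕ) (k : Fin d → ℕ) (hd : 0 < d) : Fin d → ℤ :=
  Pi.single ⟨0, hd⟩ (k ⟨0, hd⟩ : ℤ)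

/-- A 2-cocycle is normalized if α(L_{m-k₁e₁}, L_{k₁e₁})=0 for m ∈ R, m ≠ 2k₁e₁,
α(L_0, L_{2k₁e₁})=0, α(L_0, L_s)=0 for s ∉ R, and α(L_m,L_n)=0 whenever m+n ≠ 0. -/
def IsNormalized (d : ℕ) (Q : Matrix (Fin d) (Fin d) ℂ) (k : Fin d → ℕ) (hd : 0 < d)
    (α : g d →ₗ[ℂ] g d →ₗ[ℂ] ℂ) : Prop :=
  (∀ m ∈ Rset d Q, m ≠ 2 • k1e1 d k hd →
      α (L d (m - k1e1 d k hd)) (L d (k1e1 d k hd)) = 0) ∧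
  α (L d 0) (L d (2 • k1e1 d k hd)) = 0 ∧
  (∀ s, s ∉ Rset d Q → α (L d 0) (L d s) = 0) ∧
  (∀ m n : Fin d → ℤ, m + n ≠ 0 → α (L d m) (L d n) = 0)

/-- The degree derivation ∂_i, acting by ∂_i(L_m) = m_i L_m. -/
noncomputable def deg (d : ℕ) (i : Fin d) (y : g d) : g d :=
  y.sum fun m a => Finsupp.single m ((m i : ℂ) * a)

open Classical in
/-- The 2-cocycle α₁: α₁(L_m,L_n) = δ_{m+n,0}((m_γ)³-m_γ)/12 for m ∈ R, 0 otherwise,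
where m_γ = (γ|m)/(γ|k₁e₁). -/
noncomputable def alpha1 (d : ℕ) (Q : Matrix (Fin d) (Fin d) ℂ) (γ : Fin d → ℂ)
    (k : Fin d → ℕ) (hd : 0 < d) (x y : g d) : ℂ :=
  x.sum fun m a => y.sum fun n b => a * b *
    (if m ∈ Rset d Q ∧ m + n = 0 then
       ((ip d γ m / ip d γ (k1e1 d k hd)) ^ 3 - ip d γ m / ip d γ (k1e1 d k hd)) / 12
     else 0)

open Classical in
/-- The 2-cocycle α₂: α₂(L_r,L_s) = δ_{r+s,0} σ(r,-r)(γ|r)/(γ|k₁e₁) for r ∉ R,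
0 otherwise. -/
noncomputable def alpha2 (d : ℕ) (Q : Matrix (Fin d) (Fin d) ℂ) (γ : Fin d → ℂ)
    (k : Fin d → ℕ) (hd : 0 < d) (x y : g d) : ℂ :=
  x.sum fun m a => y.sum fun n b => a * b *
    (if m ∉ Rset d Q ∧ m + n = 0 then
       qsigma d Q m (-m) * (ip d γ m / ip d γ (k1e1 d k hd))
     else 0)

end QTorus

/-!
Write `σ` for `qsigma`. Once `Q` is in rational normal form, `Q j i` with `i < j` can differ from
`1` only when `i` is even and `j` is odd. So `σ(m, n)` only sees the even coordinates of `n`, and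
for `m` in the radical `R` it equals `σ(n_even, m)`, which only sees the odd coordinates of
`n_even`, hence is `1`. Thus brackets with `L_m`, `m ∈ R`, carry no `σ`-factors, and
`[L_n, L_{-(m+n)}] = 0` for `n ∉ R`; the cocycle identity on `L_m, L_n, L_{-(m+n)}` then reduces to
`(γ|n) α(L_{m+n}, L_{-(m+n)}) = (γ|m+n) α(L_n, L_{-n})`. Reducing the coordinates of `n ∉ R` modulo
`k` moves `n` into `Γ` by an element of `R`; genericity of `γ` makes `(γ|r) ≠ 0` for the
representative `r ≠ 0`, so the values on `Γ` determine all diagonal values.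
-/

namespace QTorus

variable {d : ℕ} {Q : Matrix (Fin d) (Fin d) ℂ}

section qsigma

lemma qsigma_neg_left (m n : Fin d → ℤ) : qsigma d Q (-m) n = (qsigma d Q m n)⁻¹ := by
  simp only [qsigma, ← Finset.prod_inv_distrib]
  refine Finset.prod_congr rfl fun i _ => Finset.prod_congr rfl fun j _ => ?_
  split_ifs
  · rw [Pi.neg_apply, neg_mul, zpow_neg]
  · rw [inv_one]

lemma qsigma_neg_right (m n : Fin d → ℤ) : qsigma d Q m (-n) = (qsigma d Q m n)⁻¹ := by
  simp only [qsigma, ← Finset.prod_inv_distrib]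
  refine Finset.prod_congr rfl fun i _ => Finset.prod_congr rfl fun j _ => ?_
  split_ifs
  · rw [Pi.neg_apply, mul_neg, zpow_neg]
  · rw [inv_one]

lemma qsigma_add_left (hQ : ∀ i j, Q i j ≠ 0) (a b n : Fin d → ℤ) :
    qsigma d Q (a + b) n = qsigma d Q a n * qsigma d Q b n := by
  simp only [qsigma, ← Finset.prod_mul_distrib]
  refine Finset.prod_congr rfl fun i _ => Finset.prod_congr rfl fun j _ => ?_
  split_ifs
  · rw [Pi.add_apply, add_mul, zpow_add₀ (hQ j i)]
  · rw [one_mul]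

lemma qsigma_add_right (hQ : ∀ i j, Q i j ≠ 0) (m a b : Fin d → ℤ) :
    qsigma d Q m (a + b) = qsigma d Q m a * qsigma d Q m b := by
  simp only [qsigma, ← Finset.prod_mul_distrib]
  refine Finset.prod_congr rfl fun i _ => Finset.prod_congr rfl fun j _ => ?_
  split_ifs
  · rw [Pi.add_apply, mul_add, zpow_add₀ (hQ j i)]
  · rw [one_mul]

lemma qsigma_eq_one_of_left {m : Fin d → ℤ} (hm : ∀ i j, i < j → Q j i ≠ 1 → m j = 0)
    (n : Fin d → ℤ) : qsigma d Q m n = 1 := by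
  refine Finset.prod_eq_one fun i _ => Finset.prod_eq_one fun j _ => ?_
  split_ifs with hij
  · by_cases h : Q j i = 1
    · rw [h, one_zpow]
    · rw [hm i j hij h, zero_mul, zpow_zero]
  · rfl

lemma qsigma_congr_right (m : Fin d → ℤ) {n n' : Fin d → ℤ}
    (h : ∀ i j, i < j → Q j i ≠ 1 → n i = n' i) : qsigma d Q m n = qsigma d Q m n' := by
  refine Finset.prod_congr rfl fun i _ => Finset.prod_congr rfl fun j _ => ?_
  split_ifs with hij
  · by_cases h1 : Q j i = 1
    · rw [h1, one_zpow, one_zpow]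
    · rw [h i j hij h1]
  · rfl

lemma qsigma_eq_one_of_mem_Rset_of_graded (p : Fin d → Prop) [DecidablePred p]
    (hp : ∀ i j, i < j → Q j i ≠ 1 → p i ∧ ¬ p j) {m : Fin d → ℤ} (hm : m ∈ Rset d Q)
    (n : Fin d → ℤ) : qsigma d Q m n = 1 :=
  calc qsigma d Q m n = qsigma d Q m (fun i => if p i then n i else 0) :=
        qsigma_congr_right m fun i j hij h => by simp [(hp i j hij h).1]
    _ = qsigma d Q (fun i => if p i then n i else 0) m := hm _
    _ = 1 := qsigma_eq_one_of_left (fun i j hij h => by simp [(hp i j hij h).2]) m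

lemma qsigma_zero_left (n : Fin d → ℤ) : qsigma d Q 0 n = 1 :=
  Finset.prod_eq_one fun _ _ => Finset.prod_eq_one fun _ _ => by simp

lemma qsigma_zero_right (m : Fin d → ℤ) : qsigma d Q m 0 = 1 :=
  Finset.prod_eq_one fun _ _ => Finset.prod_eq_one fun _ _ => by simp

end qsigma

def radical (hQ : ∀ i j, Q i j ≠ 0) : AddSubgroup (Fin d → ℤ) where
  carrier := Rset d Q
  zero_mem' n := by rw [qsigma_zero_left, qsigma_zero_right]
  add_mem' {a b} ha hb n := by
    rw [qsigma_add_left hQ, qsigma_add_right hQ, ha n, hb n]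
  neg_mem' {a} ha n := by rw [qsigma_neg_left, qsigma_neg_right, ha n]

@[simp]
lemma mem_radical (hQ : ∀ i j, Q i j ≠ 0) {m : Fin d → ℤ} : m ∈ radical hQ ↔ m ∈ Rset d Q :=
  Iff.rfl

section RNF

variable {z : ℕ} {k : Fin d → ℕ}

lemma IsRNF.exists_pair_of_ne_one (hRNF : IsRNF d Q z k) {i j : Fin d} (hij : i < j)
    (h : Q j i ≠ 1) : ∃ l < z, i.val = 2 * l ∧ j.val = 2 * l + 1 := by
  by_contra hne
  refine h (hRNF.2.2.1 j i ?_)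
  rintro ⟨l, hl, ⟨hj, hi⟩ | ⟨hj, hi⟩⟩
  · exact absurd (Fin.lt_def.mp hij) (by omega)
  · exact hne ⟨l, hl, hi, hj⟩

lemma IsRNF.qsigma_eq_one_of_mem_Rset (hRNF : IsRNF d Q z k) {m : Fin d → ℤ}
    (hm : m ∈ Rset d Q) (n : Fin d → ℤ) : qsigma d Q m n = 1 := by
  refine qsigma_eq_one_of_mem_Rset_of_graded (fun i => Even i.val) (fun i j hij h => ?_) hm n
  obtain ⟨l, -, hi, hj⟩ := hRNF.exists_pair_of_ne_one hij h
  simp only [hi, hj, Nat.even_add_one, even_two_mul, not_true_eq_false, not_false_eq_true,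
    and_self]

lemma IsRNF.zpow_eq_one_of_dvd (hRNF : IsRNF d Q z k) {i j : Fin d} (hij : i < j) {c : ℤ}
    (hc : (k i : ℤ) ∣ c ∨ (k j : ℤ) ∣ c) : Q j i ^ c = 1 := by
  by_cases h : Q j i = 1
  · rw [h, one_zpow]
  obtain ⟨l, hl, hi, hj⟩ := hRNF.exists_pair_of_ne_one hij h
  have hi' : 2 * l < d := hi ▸ i.isLt
  have hj' : 2 * l + 1 < d := hj ▸ j.isLt
  obtain rfl : i = ⟨2 * l, hi'⟩ := Fin.ext hi
  obtain rfl : j = ⟨2 * l + 1, hj'⟩ := Fin.ext hj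
  obtain ⟨hprim, hinv, hk, -⟩ := hRNF.2.2.2.1 l hl hi' hj'
  rw [hk, or_self] at hc
  rw [hinv, inv_zpow, (hprim.zpow_eq_one_iff_dvd c).2 hc, inv_one]

lemma IsRNF.mem_Rset_of_dvd (hRNF : IsRNF d Q z k) {m : Fin d → ℤ}
    (hm : ∀ i, (k i : ℤ) ∣ m i) : m ∈ Rset d Q := by
  intro n
  have hmn : qsigma d Q m n = 1 :=
    Finset.prod_eq_one fun i _ => Finset.prod_eq_one fun j _ => by
      split_ifs with hij
      exacts [hRNF.zpow_eq_one_of_dvd hij (.inr ((hm j).mul_right _)), rfl]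
  have hnm : qsigma d Q n m = 1 :=
    Finset.prod_eq_one fun i _ => Finset.prod_eq_one fun j _ => by
      split_ifs with hij
      exacts [hRNF.zpow_eq_one_of_dvd hij (.inl ((hm i).mul_left _)), rfl]
  rw [hmn, hnm]

lemma IsRNF.k_pos (hRNF : IsRNF d Q z k) (i : Fin d) : 0 < k i := by
  rcases le_or_gt (2 * z) i.val with h | h
  · rw [hRNF.2.2.2.2.2 i h]
    exact one_pos
  obtain ⟨l, hi⟩ : ∃ l, i.val = 2 * l ∨ i.val = 2 * l + 1 := ⟨i.val / 2, by omega⟩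
  have hl : l < z := by omega
  have h2 : 2 * l + 1 < d := by have := hRNF.2.1; omega
  obtain ⟨-, -, hk, hk1⟩ := hRNF.2.2.2.1 l hl (by omega) h2
  rcases hi with hi | hi
  · rw [show i = ⟨2 * l, by omega⟩ from Fin.ext hi]
    omega
  · rw [show i = ⟨2 * l + 1, h2⟩ from Fin.ext hi, hk]
    omega

lemma IsRNF.exists_sub_mem_Rset (hRNF : IsRNF d Q z k) (n : Fin d → ℤ) :
    ∃ r : Fin d → ℤ, (∀ i, 0 ≤ r i ∧ r i < (k i : ℤ)) ∧ n - r ∈ Rset d Q := by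
  have hk (i : Fin d) : (0 : ℤ) < k i := by exact_mod_cast hRNF.k_pos i
  exact ⟨fun i => n i % k i, fun i => ⟨Int.emod_nonneg _ (hk i).ne', Int.emod_lt_of_pos _ (hk i)⟩,
    hRNF.mem_Rset_of_dvd fun i => Int.dvd_self_sub_of_emod_eq rfl⟩

end RNF

lemma ip_neg (γ : Fin d → ℂ) (m : Fin d → ℤ) : ip d γ (-m) = -ip d γ m := by
  simp only [ip, Pi.neg_apply, Int.cast_neg, mul_neg, Finset.sum_neg_distrib]

lemma Generic.ip_ne_zero {γ : Fin d → ℂ} (hγ : Generic d γ) {m : Fin d → ℤ} (hm : m ≠ 0) :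
    ip d γ m ≠ 0 := by
  refine fun h => hm (funext fun i => ?_)
  have hsum : ∑ i, (m i : ℚ) • γ i = 0 := by
    rw [← h, ip]
    refine Finset.sum_congr rfl fun i _ => ?_
    rw [Rat.smul_def, Rat.cast_intCast, mul_comm]
  exact_mod_cast Fintype.linearIndependent_iff.mp hγ _ hsum i

section Cocycle

variable {γ : Fin d → ℂ} {α : g d →ₗ[ℂ] g d →ₗ[ℂ] ℂ}

lemma br_L (m n : Fin d → ℤ) : br d Q γ (L d m) (L d n) = sc d Q γ m n • L d (m + n) := by
  rw [br, L, L, Finsupp.sum_single_index, Finsupp.sum_single_index, one_mul, one_mul, L,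
    Finsupp.smul_single_one]
  · rw [mul_zero, zero_mul, Finsupp.single_zero]
  · simp

lemma IsCocycle.apply_br_L (hα : IsCocycle d Q γ α) (a b c : Fin d → ℤ) :
    sc d Q γ a b * α (L d (a + b)) (L d c) + sc d Q γ c a * α (L d (c + a)) (L d b) +
      sc d Q γ b c * α (L d (b + c)) (L d a) = 0 := by
  simpa only [br_L, map_smul, LinearMap.smul_apply, smul_eq_mul] using
    hα.2 (L d a) (L d b) (L d c)

lemma IsCocycle.ip_mul_apply_add_of_mem_Rset (hQ : ∀ i j, Q i j ≠ 0)
    (hα : IsCocycle d Q γ α) {m : Fin d → ℤ} (hm : m ∈ Rset d Q)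
    (hσ : ∀ x, qsigma d Q m x = 1) {n : Fin d → ℤ} (hn : n ∉ Rset d Q) :
    ip d γ n * α (L d (m + n)) (L d (-(m + n))) = ip d γ (m + n) * α (L d n) (L d (-n)) := by
  have hmn : -(m + n) ∉ Rset d Q := fun h =>
    hn (by simpa using (radical hQ).sub_mem ((radical hQ).neg_mem h) hm)
  have hσ' (x : Fin d → ℤ) : qsigma d Q x m = 1 := (hm x).symm.trans (hσ x)
  have hsc₁ : sc d Q γ m n = ip d γ n := by
    rw [sc, if_pos hm, if_neg hn, hσ, one_mul]
  have hsc₂ : sc d Q γ (-(m + n)) m = ip d γ (m + n) := by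
    rw [sc, if_neg hmn, if_pos hm, hσ, one_mul, ip_neg, neg_neg]
  have hsc₃ : sc d Q γ n (-(m + n)) = 0 := by
    rw [sc, if_neg hn, if_neg hmn, qsigma_neg_right, qsigma_neg_left, qsigma_add_right hQ,
      qsigma_add_left hQ, hσ, hσ', one_mul, sub_self]
  have hcoc := hα.apply_br_L m n (-(m + n))
  rw [hsc₁, hsc₂, hsc₃, show -(m + n) + m = -n by abel, hα.1 (L d (-n))] at hcoc
  linear_combination hcoc

end Cocycle

end QTorus

open QTorus

theorem stmt17_general (d : ℕ) (hd : 0 < d)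
    (Q : Matrix (Fin d) (Fin d) ℂ) (hQ : QOk d Q)
    (z : ℕ) (k : Fin d → ℕ) (hRNF : IsRNF d Q z k)
    (γ : Fin d → ℂ) (hγ : Generic d γ) :
    (∀ α : g d →ₗ[ℂ] g d →ₗ[ℂ] ℂ, IsCocycle d Q γ α → IsNormalized d Q k hd α →
      ∀ m ∈ Rset d Q, ∀ n ∉ Rset d Q,
        ip d γ n * α (L d (m + n)) (L d (-(m + n))) =
          ip d γ (m + n) * α (L d n) (L d (-n))) ∧
    (∀ α β : g d →ₗ[ℂ] g d →ₗ[ℂ] ℂ,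
      IsCocycle d Q γ α → IsNormalized d Q k hd α →
      IsCocycle d Q γ β → IsNormalized d Q k hd β →
      (∀ n : Fin d → ℤ, n ∉ Rset d Q → (∀ i, 0 ≤ n i ∧ n i < (k i : ℤ)) →
        α (L d n) (L d (-n)) = β (L d n) (L d (-n))) →
      ∀ n : Fin d → ℤ, n ∉ Rset d Q →
        α (L d n) (L d (-n)) = β (L d n) (L d (-n))) := by
  refine ⟨fun α hα _ m hm n hn =>
      hα.ip_mul_apply_add_of_mem_Rset hQ.2.2 hm (hRNF.qsigma_eq_one_of_mem_Rset hm) hn,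
    fun α β hα _ hβ _ hΓ n hn => ?_⟩
  obtain ⟨r, hr_bound, hnr⟩ := hRNF.exists_sub_mem_Rset n
  have hr : r ∉ Rset d Q := fun h => hn (by simpa using (radical hQ.2.2).add_mem hnr h)
  have hr0 : ip d γ r ≠ 0 := hγ.ip_ne_zero (by rintro rfl; exact hr (radical hQ.2.2).zero_mem)
  have hα' := hα.ip_mul_apply_add_of_mem_Rset hQ.2.2 hnr (hRNF.qsigma_eq_one_of_mem_Rset hnr) hr
  have hβ' := hβ.ip_mul_apply_add_of_mem_Rset hQ.2.2 hnr (hRNF.qsigma_eq_one_of_mem_Rset hnr) hr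
  rw [sub_add_cancel] at hα' hβ'
  apply mul_left_cancel₀ hr0
  rw [hα', hβ', hΓ r hr hr_bound]

/-- for Q in rational normal form and γ generic: (a) every normalized
2-cocycle α satisfies (γ|n)·α(L_{m+n},L_{−m−n}) = (γ|m+n)·α(L_n,L_{−n}) for m ∈ R,
n ∉ R; (b) in particular the diagonal values of α on ℤ^d∖R are determined by its
values on Γ = {n ∈ ℤ^d∖R : 0 ≤ n_i < k_i for all i}. -/
theorem stmt17 (d : ℕ) (hd1 : 1 < d) (hd : 0 < d)
    (Q : Matrix (Fin d) (Fin d) ℂ) (hQ : QOk d Q)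
    (z : ℕ) (k : Fin d → ℕ) (hRNF : IsRNF d Q z k)
    (γ : Fin d → ℂ) (hγ : Generic d γ) :
    (∀ α : g d →ₗ[ℂ] g d →ₗ[ℂ] ℂ, IsCocycle d Q γ α → IsNormalized d Q k hd α →
      ∀ m ∈ Rset d Q, ∀ n ∉ Rset d Q,
        ip d γ n * α (L d (m + n)) (L d (-(m + n))) =
          ip d γ (m + n) * α (L d n) (L d (-n))) ∧
    (∀ α β : g d →ₗ[ℂ] g d →ₗ[ℂ] ℂ,
      IsCocycle d Q γ α → IsNormalized d Q k hd α →
      IsCocycle d Q γ β → IsNormalized d Q k hd β →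
      (∀ n : Fin d → ℤ, n ∉ Rset d Q → (∀ i, 0 ≤ n i ∧ n i < (k i : ℤ)) →
        α (L d n) (L d (-n)) = β (L d n) (L d (-n))) →
      ∀ n : Fin d → ℤ, n ∉ Rset d Q →
        α (L d n) (L d (-n)) = β (L d n) (L d (-n))) :=
  stmt17_general d hd Q hQ z k hRNF γ hγ
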